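/- Let g ≥ 3 and δ ≥ 2, and suppose there exists a graph H with f vertices, girth at least g, and minimum degree δ, that is connected and contains an edge lying on a cycle. Then for every integer r > g/2 there exists a connected simple graph on n = ⌈2r/g⌉·f vertices with girth at least g, minimum degree δ, and radius at least r. -/

import Mathlib

/-!
Delete a non-bridge edge `uy` of `H` and join `k = ⌈2r/g⌉` copies of `H - uy` in a cycle by the
edges `(u, j) (y, j + 1)`. Every neighbour of `a` in `H` lifts to a neighbour of `(a, j)`, so degrees
do not drop. A cycle of the new graph either stays inside one copy, and is then a cycle of `H`, or
uses some joining edge `(u, j) (y, j + 1)`. In the second case the rest of the cycle is a walk from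
`(y, j + 1)` to `(u, j)` avoiding that edge, along which the distance to `y` measured in copy `j`
(and set to `0` outside it) grows by at most one per step; so the cycle has length at least
`d(y, u) + 1 ≥ g`, the distance being taken in `H - uy`, where every `y`–`u` path closes up with `uy`
into a cycle of `H`.

For the radius, put `d = d(y, u)` and send `(a, j)` to `j (d + 1) + min (d(y, a)) d` on the cycle
`ℤ / k (d + 1) ℤ`. This map is onto and changes by at most one along every edge, so every vertex
has a vertex at circular distance `r ≤ k (d + 1) / 2` from its image, hence at graph distance `≥ r`.
-/

/-- The eccentricity of a vertex: the maximum distance to any other vertex. -/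
noncomputable def eccentricity {V : Type*} (G : SimpleGraph V) (v : V) : ℕ :=
  ⨆ w, G.dist v w

/-- The radius of a graph: the minimum eccentricity over all vertices. -/
noncomputable def graphRadius {V : Type*} (G : SimpleGraph V) : ℕ :=
  ⨅ v, eccentricity G v

namespace SimpleGraph

variable {V V' : Type*} {G : SimpleGraph V} {G' : SimpleGraph V'}

namespace Walk

theorem apply_le_apply_add_length (f : V → ℕ) :
    ∀ {u v : V} (p : G.Walk u v), (∀ d ∈ p.darts, f d.snd ≤ f d.fst + 1) →
      f v ≤ f u + p.length
  | _, _, nil, _ => by simp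
  | _, _, cons h p, hf => by
    have hfirst := hf ⟨(_, _), h⟩ List.mem_cons_self
    have hrest := apply_le_apply_add_length f p fun d hd => hf d (List.mem_cons_of_mem _ hd)
    rw [length_cons]
    dsimp only at hfirst
    omega

theorem exists_mem_support_apply_eq (f : V → ℕ) {u v : V} (p : G.Walk u v)
    (hf : ∀ d ∈ p.darts, f d.snd ≤ f d.fst + 1) {s : ℕ} (hu : f u ≤ s) (hv : s ≤ f v) :
    ∃ w ∈ p.support, f w = s := by
  rcases hu.eq_or_lt with rfl | hlt
  · exact ⟨u, p.start_mem_support, rfl⟩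
  obtain ⟨d, hd, hfst, hsnd⟩ :=
    p.exists_boundary_dart {w | f w < s} hlt (by simpa using hv)
  have := hf d hd
  simp only [Set.mem_ofPred_eq, not_lt] at hfst hsnd
  exact ⟨d.snd, p.dart_snd_mem_support_of_mem_darts hd, by omega⟩

theorem natAbs_valMinAbs_sub_le_length {n : ℕ} (f : V → ZMod n) {u v : V} (p : G.Walk u v)
    (hf : ∀ d ∈ p.darts, (f d.snd - f d.fst).valMinAbs.natAbs ≤ 1) :
    (f v - f u).valMinAbs.natAbs ≤ p.length := by
  simpa using p.apply_le_apply_add_length (fun w => (f w - f u).valMinAbs.natAbs) fun d hd =>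
    calc (f d.snd - f u).valMinAbs.natAbs
        = ((f d.fst - f u) + (f d.snd - f d.fst)).valMinAbs.natAbs := by ring_nf
      _ ≤ ((f d.fst - f u).valMinAbs + (f d.snd - f d.fst).valMinAbs).natAbs :=
        ZMod.natAbs_valMinAbs_add_le _ _
      _ ≤ _ := (Int.natAbs_add_le _ _).trans (by have := hf d hd; omega)

theorem IsCycle.edge_snd_notMem_edges_tail {u : V} {c : G.Walk u u} (hc : c.IsCycle) :
    s(u, c.snd) ∉ c.tail.edges := by
  have hnodup := hc.isCircuit.isTrail.edges_nodup
  rw [← c.cons_tail_eq hc.not_nil, edges_cons, List.nodup_cons] at hnodup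
  exact hnodup.1

theorem IsCycle.exists_walk_length_add_one_eq [DecidableEq V] {u v w : V} {c : G.Walk u u}
    (hc : c.IsCycle) (he : s(v, w) ∈ c.edges) :
    ∃ p : G.Walk w v, s(v, w) ∉ p.edges ∧ p.length + 1 = c.length := by
  have hv : v ∈ c.support := c.fst_mem_support_of_mem_edges he
  have hc' := hc.rotate hv
  have hw : w ∈ (c.rotate v hv).toSubgraph.neighborSet v := by
    rw [Subgraph.mem_neighborSet, adj_toSubgraph_iff_mem_edges]
    exact (c.rotate_edges v hv).mem_iff.mpr he
  rw [hc'.neighborSet_toSubgraph_endpoint, Set.mem_insert_iff, Set.mem_singleton_iff] at hw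
  rw [← c.length_rotate v hv]
  rcases hw with rfl | rfl
  · exact ⟨_, hc'.edge_snd_notMem_edges_tail, length_tail_add_one hc'.not_nil⟩
  · have := hc'.reverse.edge_snd_notMem_edges_tail
    refine ⟨(c.rotate v hv).reverse.tail.copy (snd_reverse _) rfl, ?_, ?_⟩
    · simpa using this
    · simpa using length_tail_add_one hc'.reverse.not_nil

theorem IsCycle.egirth_induce_le_length {s : Set V} {u : V} {c : G.Walk u u} (hc : c.IsCycle)
    (hs : ∀ w ∈ c.support, w ∈ s) : (G.induce s).egirth ≤ c.length := by
  have hmap := c.map_induce hs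
  have hinj : Function.Injective (Embedding.induce (G := G) s).toHom :=
    (Embedding.induce (G := G) s).injective
  have hcyc : ((c.induce s hs).map (Embedding.induce s).toHom).IsCycle := by rwa [hmap]
  have hlen : ((c.induce s hs).map (Embedding.induce s).toHom).length = c.length := by
    rw [hmap]; rfl
  rw [length_map] at hlen
  exact hlen ▸ egirth_le_length ((isCycle_map_iff_of_injective hinj).mp hcyc)

end Walk

theorem Adj.dist_le_dist_add_one {a b : V} (h : G.Adj a b) (v : V) :
    G.dist v b ≤ G.dist v a + 1 := by
  have := h.diff_dist_adj (u := v)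
  omega

theorem egirth_le_dist_deleteEdges_add_one {u v : V} (huv : G.Adj u v)
    (hreach : (G.deleteEdges {s(u, v)}).Reachable u v) :
    G.egirth ≤ (G.deleteEdges {s(u, v)}).dist v u + 1 := by
  obtain ⟨p, hp, hlen⟩ := hreach.symm.exists_path_of_dist
  have hcycle : (Walk.cons huv (p.mapLe (deleteEdges_le _))).IsCycle := by
    refine (Walk.cons_isCycle_iff _ huv).mpr ⟨hp.mapLe _, fun he => ?_⟩
    rw [Walk.edges_mapLe_eq_edges] at he
    simpa using p.edges_subset_edgeSet he
  simpa [hlen, add_comm] using egirth_le_length hcycle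

theorem deleteEdges_sup_edge_of_adj {u v : V} (h : G.Adj u v) :
    G.deleteEdges {s(u, v)} ⊔ edge u v = G := by
  rw [deleteEdges, ← edge, sdiff_sup_self, sup_edge_of_adj _ h]

def cycleOfCopies (G : SimpleGraph V) (u v : V) (k : ℕ) : SimpleGraph (V × ZMod k) :=
  fromRel fun p q => (p.2 = q.2 ∧ G.Adj p.1 q.1) ∨ (p.1 = u ∧ q.1 = v ∧ q.2 = p.2 + 1)

namespace cycleOfCopies

variable {u v : V} {k : ℕ}

theorem adj_layer {a b : V} (h : G.Adj a b) (j : ZMod k) :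
    (G.cycleOfCopies u v k).Adj (a, j) (b, j) :=
  ⟨fun he => h.ne (congrArg Prod.fst he), .inl (.inl ⟨rfl, h⟩)⟩

theorem reachable_cross (j : ZMod k) : (G.cycleOfCopies u v k).Reachable (u, j) (v, j + 1) := by
  by_cases he : ((u, j) : V × ZMod k) = (v, j + 1)
  · rw [he]
  · exact Adj.reachable ⟨he, .inl (.inr ⟨rfl, rfl, rfl⟩)⟩

theorem exists_eq_cross_of_adj {p q : V × ZMod k} (h : (G.cycleOfCopies u v k).Adj p q)
    (hpq : p.2 ≠ q.2) : ∃ m, s(p, q) = s((u, m), (v, m + 1)) := by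
  obtain ⟨-, (⟨hl, -⟩ | ⟨hp, hq, hj⟩) | (⟨hl, -⟩ | ⟨hq, hp, hj⟩)⟩ := h
  · exact absurd hl hpq
  · exact ⟨p.2, by rw [← hp, ← hq, ← hj]⟩
  · exact absurd hl.symm hpq
  · exact ⟨q.2, by rw [← hp, ← hq, ← hj, Sym2.eq_swap]⟩

theorem connected [NeZero k] (hG : G.Connected) : (G.cycleOfCopies u v k).Connected := by
  have hlayer (j : ZMod k) {a b : V} (h : G.Reachable a b) :
      (G.cycleOfCopies u v k).Reachable (a, j) (b, j) :=
    h.map ⟨fun a => (a, j), fun h => adj_layer h j⟩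
  have hstep (n : ℕ) : (G.cycleOfCopies u v k).Reachable (v, 0) (v, n) := by
    induction n with
    | zero => simp
    | succ n ih =>
      push_cast
      exact ih.trans ((hlayer _ (hG v u)).trans (reachable_cross _))
  have : Nonempty V := hG.nonempty
  refine connected_iff_exists_forall_reachable _ |>.mpr ⟨(v, 0), fun ⟨a, j⟩ => ?_⟩
  exact (ZMod.natCast_zmod_val j ▸ hstep j.val).trans (hlayer j (hG v a))

theorem neighborSet_sup_edge_subset (a : V) (j : ZMod k) :
    (G ⊔ edge u v).neighborSet a ⊆ Prod.fst '' (G.cycleOfCopies u v k).neighborSet (a, j) := by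
  intro b hb
  rcases hb with hb | hb
  · exact ⟨(b, j), adj_layer hb j, rfl⟩
  obtain ⟨(⟨rfl, rfl⟩ | ⟨rfl, rfl⟩), hne⟩ := (edge_adj _ _ _ _).mp hb
  · exact ⟨(b, j + 1), ⟨fun he => hne (congrArg Prod.fst he), .inl (.inr ⟨rfl, rfl, rfl⟩)⟩, rfl⟩
  · refine ⟨(b, j - 1), ⟨fun he => hne (congrArg Prod.fst he), .inr (.inr ⟨rfl, rfl, ?_⟩)⟩, rfl⟩
    simp

theorem ncard_neighborSet_sup_edge_le [Finite V] [NeZero k] (a : V) (j : ZMod k) :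
    ((G ⊔ edge u v).neighborSet a).ncard ≤ ((G.cycleOfCopies u v k).neighborSet (a, j)).ncard :=
  (Set.ncard_le_ncard (neighborSet_sup_edge_subset a j) (Set.toFinite _)).trans
    (Set.ncard_image_le (Set.toFinite _))

theorem egirth_le_length_of_forall_mem_darts [Fact (1 < k)] {x : V × ZMod k}
    {c : (G.cycleOfCopies u v k).Walk x x} (hc : c.IsCycle)
    (hlayer : ∀ d ∈ c.darts, d.fst.2 = d.snd.2) : G.egirth ≤ c.length := by
  classical
  set s : Set (V × ZMod k) := {q | q.2 = x.2}
  have hs : ∀ q ∈ c.support, q ∈ s := by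
    intro q hq
    by_contra hqs
    obtain ⟨d, hd, hfst, hsnd⟩ := (c.takeUntil q hq).exists_boundary_dart s rfl hqs
    exact hsnd ((hlayer d (c.darts_takeUntil_subset_darts hq hd)).symm.trans hfst)
  have hcopy : (G.cycleOfCopies u v k).induce s ⊑ G := by
    refine ⟨⟨fun q => q.1.1, fun {q q'} h => ?_⟩, fun q q' h => ?_⟩
    have hsame : q.1.2 = q'.1.2 := q.2.trans q'.2.symm
    obtain ⟨-, (⟨-, h⟩ | ⟨-, -, hj⟩) | (⟨-, h⟩ | ⟨-, -, hj⟩)⟩ := h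
    · exact h
    · simp [hsame] at hj
    · exact h.symm
    · simp [hsame] at hj
    · exact Subtype.ext (Prod.ext h (q.2.trans q'.2.symm))
  exact hcopy.egirth_le.trans (hc.egirth_induce_le_length hs)

theorem dist_add_one_le_length [Fact (1 < k)] {x : V × ZMod k}
    {c : (G.cycleOfCopies u v k).Walk x x} (hc : c.IsCycle) {m : ZMod k}
    (hm : s((u, m), (v, m + 1)) ∈ c.edges) : G.dist v u + 1 ≤ c.length := by
  classical
  obtain ⟨p, hpe, hlen⟩ := hc.exists_walk_length_add_one_eq hm
  let Φ : V × ZMod k → ℕ := fun q => if q.2 = m then G.dist v q.1 else 0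
  have hΦ : ∀ ⦃q q'⦄, (G.cycleOfCopies u v k).Adj q q' → s(q, q') ≠ s((u, m), (v, m + 1)) →
      Φ q' ≤ Φ q + 1 := by
    rintro ⟨a, i⟩ ⟨b, j⟩ ⟨-, (⟨rfl, hadj⟩ | ⟨-, rfl, -⟩) | (⟨rfl, hadj⟩ | ⟨rfl, rfl, rfl⟩)⟩ hne
    · have := hadj.dist_le_dist_add_one v
      simp only [Φ]
      split_ifs <;> omega
    · simp [Φ]
    · have := hadj.symm.dist_le_dist_add_one v
      simp only [Φ]
      split_ifs <;> omega
    · rcases eq_or_ne j m with rfl | hjm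
      · exact absurd Sym2.eq_swap hne
      · simp [Φ, hjm]
  have := p.apply_le_apply_add_length Φ fun d hd =>
    hΦ d.adj fun h => hpe (h ▸ List.mem_map_of_mem hd)
  simp [Φ] at this
  omega

theorem min_egirth_dist_le_egirth [Fact (1 < k)] :
    min G.egirth (G.dist v u + 1) ≤ (G.cycleOfCopies u v k).egirth := by
  refine le_egirth.mpr fun x c hc => ?_
  by_cases hlayer : ∀ d ∈ c.darts, d.fst.2 = d.snd.2
  · exact (min_le_left _ _).trans (egirth_le_length_of_forall_mem_darts hc hlayer)
  · push Not at hlayer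
    obtain ⟨d, hd, hne⟩ := hlayer
    obtain ⟨m, hm⟩ := exists_eq_cross_of_adj d.adj hne
    have := dist_add_one_le_length hc (by rw [← hm]; exact List.mem_map_of_mem hd)
    exact (min_le_right _ _).trans (by exact_mod_cast this)

noncomputable def height (G : SimpleGraph V) (u v : V) (k : ℕ) (q : V × ZMod k) :
    ZMod (k * (G.dist v u + 1)) :=
  ((q.2.val * (G.dist v u + 1) : ℕ) : ZMod (k * (G.dist v u + 1))) +
    (min (G.dist v q.1) (G.dist v u) : ℕ)

theorem height_cross [NeZero k] (j : ZMod k) :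
    height G u v k (v, j + 1) = height G u v k (u, j) + 1 := by
  have hval : (((j + 1).val * (G.dist v u + 1) : ℕ) : ZMod (k * (G.dist v u + 1))) =
      ((j.val * (G.dist v u + 1) + (G.dist v u + 1) : ℕ) : ZMod _) := by
    rw [ZMod.val_add, ZMod.val_one_eq_one_mod, Nat.add_mod_mod, ← Nat.mul_mod_mul_right,
      ZMod.natCast_mod, add_mul, one_mul]
  simp only [height, hval, dist_self, min_self, Nat.zero_min]
  push_cast
  ring

theorem natAbs_valMinAbs_height_sub_le_one [NeZero k] {q q' : V × ZMod k}
    (h : (G.cycleOfCopies u v k).Adj q q') :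
    (height G u v k q' - height G u v k q).valMinAbs.natAbs ≤ 1 := by
  obtain ⟨a, j⟩ := q
  obtain ⟨b, j'⟩ := q'
  have hlayer (j : ZMod k) : height G u v k (b, j) - height G u v k (a, j) =
      (((min (G.dist v b) (G.dist v u) : ℕ) - (min (G.dist v a) (G.dist v u) : ℕ) : ℤ) :
        ZMod (k * (G.dist v u + 1))) := by
    simp only [height, Int.cast_sub, Int.cast_natCast]
    ring
  obtain ⟨i, hi, heq⟩ : ∃ i : ℤ, i.natAbs ≤ 1 ∧
      height G u v k (b, j') - height G u v k (a, j) = i := by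
    obtain ⟨-, (⟨rfl, hadj⟩ | ⟨rfl, rfl, rfl⟩) | (⟨rfl, hadj⟩ | ⟨rfl, rfl, rfl⟩)⟩ := h
    · dsimp only at hadj
      have := hadj.dist_le_dist_add_one v
      have := hadj.symm.dist_le_dist_add_one v
      exact ⟨_, by omega, hlayer j⟩
    · exact ⟨1, le_rfl, by rw [height_cross]; simp⟩
    · dsimp only at hadj
      have := hadj.dist_le_dist_add_one v
      have := hadj.symm.dist_le_dist_add_one v
      exact ⟨_, by omega, hlayer j'⟩
    · exact ⟨-1, le_rfl, by rw [height_cross]; simp⟩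
  rw [heq]
  exact (ZMod.natAbs_min_of_le_div_two _ _ _ (ZMod.coe_valMinAbs _)
    (ZMod.natAbs_valMinAbs_le _)).trans hi

theorem height_surjective [NeZero k] (hG : G.Connected) :
    Function.Surjective (height G u v k) := by
  intro t
  have hs : t.val % (G.dist v u + 1) ≤ G.dist v u := Nat.lt_succ_iff.mp (Nat.mod_lt _ (by omega))
  have hq : t.val / (G.dist v u + 1) < k := Nat.div_lt_of_lt_mul (mul_comm k _ ▸ t.val_lt)
  obtain ⟨p⟩ := hG v u
  obtain ⟨a, -, ha⟩ := p.exists_mem_support_apply_eq (G.dist v ·)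
    (fun d _ => d.adj.dist_le_dist_add_one v) (by simp) hs
  refine ⟨(a, (t.val / (G.dist v u + 1) : ℕ)), ?_⟩
  simp only [height, ZMod.val_natCast_of_lt hq, ha, min_eq_left hs]
  rw [← Nat.cast_add, Nat.div_add_mod', ZMod.natCast_zmod_val]

theorem exists_le_dist [NeZero k] (hG : G.Connected) {r : ℕ} (hr : 2 * r ≤ k * (G.dist v u + 1))
    (x : V × ZMod k) : ∃ z, r ≤ (G.cycleOfCopies u v k).dist x z := by
  obtain ⟨z, hz⟩ := height_surjective hG (height G u v k x + (r : ZMod (k * (G.dist v u + 1))))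
  obtain ⟨p, hp⟩ := (connected hG).exists_walk_length_eq_dist x z
  have := p.natAbs_valMinAbs_sub_le_length (height G u v k) fun d _ =>
    natAbs_valMinAbs_height_sub_le_one d.adj
  rw [hz, add_sub_cancel_left, ZMod.valMinAbs_natCast_of_le_half (by omega)] at this
  exact ⟨z, hp ▸ by simpa using this⟩

end cycleOfCopies

theorem Reachable.dist_map_le (f : G →g G') {u v : V} (h : G.Reachable u v) :
    G'.dist (f u) (f v) ≤ G.dist u v := by
  obtain ⟨p, hp⟩ := h.exists_walk_length_eq_dist
  simpa [hp] using dist_le (p.map f)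

theorem Iso.dist_eq (e : G ≃g G') (u v : V) : G'.dist (e u) (e v) = G.dist u v := by
  by_cases h : G.Reachable u v
  · refine le_antisymm (h.dist_map_le e.toHom) ?_
    simpa using (h.map e.toHom).dist_map_le e.symm.toHom
  · rw [dist_eq_zero_of_not_reachable h, dist_eq_zero_of_not_reachable (mt Iso.reachable_iff.mp h)]

theorem Iso.ncard_neighborSet_eq (e : G ≃g G') (v : V) :
    (G'.neighborSet (e v)).ncard = (G.neighborSet v).ncard := by
  simp only [← Nat.card_coe_set_eq]
  exact (Nat.card_congr (e.mapNeighborSet v)).symm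

theorem Iso.graphRadius_eq (e : G ≃g G') : graphRadius G' = graphRadius G := by
  simp only [graphRadius, eccentricity]
  rw [← e.toEquiv.iInf_comp]
  congr 1 with u
  rw [← e.toEquiv.iSup_comp]
  simp [e.dist_eq]

theorem le_graphRadius [Finite V] [Nonempty V] {r : ℕ} (h : ∀ v, ∃ w, r ≤ G.dist v w) :
    r ≤ graphRadius G :=
  le_ciInf fun v =>
    let ⟨w, hw⟩ := h v
    hw.trans (le_ciSup (Set.finite_range _).bddAbove w)

end SimpleGraph

open SimpleGraph in
theorem radius_girth_stmt13_general (g δ f : ℕ) (hg : 3 ≤ g)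
    {W : Type*} [Fintype W] (H : SimpleGraph W)
    (hcard : Fintype.card W = f)
    (hgirth : (g : ℕ∞) ≤ H.egirth)
    (hdeg : ∀ v : W, δ ≤ (H.neighborSet v).ncard)
    (hconn : H.Connected)
    (hedge : ∃ e ∈ H.edgeSet, ¬ H.IsBridge e)
    (r : ℕ) (hr : g < 2 * r) :
    ∃ G : SimpleGraph (Fin ((2 * r + g - 1) / g * f)), G.Connected ∧
      (g : ℕ∞) ≤ G.egirth ∧ (∀ v, δ ≤ (G.neighborSet v).ncard) ∧
      r ≤ graphRadius G := by
  obtain ⟨e, huy, hbr⟩ := hedge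
  induction e using Sym2.ind with | _ u y => ?_
  have hg0 : 0 < g := by omega
  rw [← Nat.ceilDiv_eq_add_pred_div]
  set k := 2 * r ⌈/⌉ g
  have : Fact (1 < k) := ⟨lt_of_not_ge fun h => by have := (ceilDiv_le_iff_le_mul hg0).mp h; omega⟩
  set H' := H.deleteEdges {s(u, y)}
  have hH' : H'.Connected := hconn.connected_delete_edge_of_not_isBridge hbr
  have hgH' : (g : ℕ∞) ≤ H'.dist y u + 1 :=
    hgirth.trans (egirth_le_dist_deleteEdges_add_one huy (not_not.mp hbr))
  have hr' : 2 * r ≤ k * (H'.dist y u + 1) :=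
    (le_smul_ceilDiv hg0).trans (by rw [smul_eq_mul, mul_comm]; gcongr; exact_mod_cast hgH')
  have hcard' : Fintype.card (W × ZMod k) = k * f := by simp [hcard, mul_comm]
  let iso := Iso.map (Fintype.equivFinOfCardEq hcard') (H'.cycleOfCopies u y k)
  have : Nonempty W := hconn.nonempty
  refine ⟨_, iso.connected_iff.mp (cycleOfCopies.connected hH'), ?_, fun v => ?_, ?_⟩
  · rw [← iso.egirth_eq]
    exact (le_min (hgirth.trans (egirth_anti (deleteEdges_le _))) hgH').trans
      cycleOfCopies.min_egirth_dist_le_egirth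
  · obtain ⟨⟨a, j⟩, rfl⟩ := iso.surjective v
    have := cycleOfCopies.ncard_neighborSet_sup_edge_le (G := H') (u := u) (v := y) a j
    rw [deleteEdges_sup_edge_of_adj huy] at this
    exact (hdeg a).trans (this.trans_eq (iso.ncard_neighborSet_eq _).symm)
  · rw [iso.graphRadius_eq]
    exact le_graphRadius (cycleOfCopies.exists_le_dist hH' hr')

/-- Suppose there is a connected graph `H` on `f` vertices of girth at
least `g ≥ 3`, minimum degree `δ ≥ 2`, containing an edge lying on a cycle (i.e. a
non-bridge edge). Then for every `r > g/2` there is a connected graph on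
`n = ⌈2r/g⌉·f` vertices of girth at least `g`, minimum degree `δ` and radius at least
`r` (note `⌈a/g⌉ = (a + g - 1)/g` in `ℕ`, and `r > g/2 ↔ 2r > g`). -/
theorem radius_girth_stmt13 (g δ f : ℕ) (hg : 3 ≤ g) (hδ : 2 ≤ δ)
    {W : Type*} [Fintype W] (H : SimpleGraph W)
    (hcard : Fintype.card W = f)
    (hgirth : (g : ℕ∞) ≤ H.egirth)
    (hdeg : ∀ v : W, δ ≤ (H.neighborSet v).ncard)
    (hconn : H.Connected)
    (hedge : ∃ e ∈ H.edgeSet, ¬ H.IsBridge e)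
    (r : ℕ) (hr : g < 2 * r) :
    ∃ G : SimpleGraph (Fin ((2 * r + g - 1) / g * f)), G.Connected ∧
      (g : ℕ∞) ≤ G.egirth ∧ (∀ v, δ ≤ (G.neighborSet v).ncard) ∧
      r ≤ graphRadius G :=
  radius_girth_stmt13_general g δ f hg H hcard hgirth hdeg hconn hedge r hr
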